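/- arXiv:1008.1372 — 4 statements merged into one kernel-verified Lean document; each statement's English description precedes it below -/
import Mathlib

section
/- If the optimal value c of the weighted max-min problem is positive, and N ≥ 2, and every user n with R_n(α) = c/γ_n has some frequency k with α_{nk} > 0 and R_{mk} > 0 for all other users m, then at the optimum all users have equal weighted rates: γ_n · Σ_k α_{nk} R_{nk} = c for every n. More precisely: if some user n has γ_n Σ_k α_{nk} R_{nk} > c while all users have weighted rate ≥ c, and user n has a bin k with α_{nk} > 0 and R_{mk} > 0 for all m ≠ n, then there is a feasible allocation achieving a value strictly greater than c, contradicting optimality. -/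
/-!
Take the share `α n k` that user `n` holds of bin `k` and split it equally among all users.
Every user `m ≠ n` strictly gains (as `R m k > 0`), and user `n` loses rate but starts strictly
above `c`. Moving a small fraction `t` of the way towards this reallocation keeps the allocation
feasible (the feasible set is convex), keeps user `n` above `c` by continuity, and lifts every
user at level `c` strictly above it; the minimum weighted rate then exceeds `c`.
-/

open Filter Topology

namespace WeightedMaxMin

variable {ι κ : Type*}

def IsAllocation [Fintype ι] (α : ι → κ → ℝ) : Prop :=
  (∀ m j, 0 ≤ α m j) ∧ ∀ j, ∑ m, α m j = 1

def rate [Fintype κ] (R α : ι → κ → ℝ) (m : ι) : ℝ :=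
  ∑ j, α m j * R m j

theorem IsAllocation.convexComb [Fintype ι] {α β : ι → κ → ℝ} (hα : IsAllocation α)
    (hβ : IsAllocation β) {t : ℝ} (ht₀ : 0 ≤ t) (ht₁ : t ≤ 1) :
    IsAllocation ((1 - t) • α + t • β) := by
  refine ⟨fun m j => ?_, fun j => ?_⟩
  · have := hα.1 m j
    have := hβ.1 m j
    simp only [Pi.add_apply, Pi.smul_apply, smul_eq_mul]
    nlinarith
  · simp [Finset.sum_add_distrib, ← Finset.mul_sum, hα.2 j, hβ.2 j]

theorem rate_convexComb [Fintype κ] (R α β : ι → κ → ℝ) (t : ℝ) (m : ι) :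
    rate R ((1 - t) • α + t • β) m = (1 - t) * rate R α m + t * rate R β m := by
  simp only [rate, Pi.add_apply, Pi.smul_apply, smul_eq_mul, Finset.mul_sum,
    ← Finset.sum_add_distrib]
  exact Finset.sum_congr rfl fun j _ => by ring

theorem exists_isAllocation_forall_lt [Fintype ι] [Fintype κ] (γ : ι → ℝ)
    (R : ι → κ → ℝ) {α β : ι → κ → ℝ} (hα : IsAllocation α) (hβ : IsAllocation β)
    {c : ℝ} (h : ∀ m, c < γ m * rate R α m ∨
      c ≤ γ m * rate R α m ∧ γ m * rate R α m < γ m * rate R β m) :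
    ∃ α', IsAllocation α' ∧ ∀ m, c < γ m * rate R α' m := by
  have hstep : ∀ m, ∀ᶠ t in 𝓝[>] (0 : ℝ),
      c < γ m * ((1 - t) * rate R α m + t * rate R β m) := by
    intro m
    rcases h m with hlt | ⟨hle, hgain⟩
    · refine (Tendsto.eventually_const_lt hlt ?_).filter_mono nhdsWithin_le_nhds
      exact Continuous.tendsto' (by fun_prop) 0 _ (by simp)
    · refine eventually_nhdsWithin_of_forall fun t (ht : 0 < t) => ?_
      nlinarith
  have hsmall : ∀ᶠ t in 𝓝[>] (0 : ℝ), t ≤ 1 :=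
    (eventually_le_nhds one_pos).filter_mono nhdsWithin_le_nhds
  obtain ⟨t, ht₀, ht₁, hgood⟩ :=
    (eventually_mem_nhdsWithin.and (hsmall.and (eventually_all.2 hstep))).exists
  refine ⟨_, hα.convexComb hβ ht₀.le ht₁, fun m => ?_⟩
  rw [rate_convexComb]
  exact hgood m

/-- The share `α n k` of user `n` in bin `k` is split equally among all users. -/
noncomputable def splitShare [Fintype ι] [DecidableEq ι] [DecidableEq κ] (α : ι → κ → ℝ)
    (n : ι) (k : κ) : ι → κ → ℝ :=
  fun m j => α m j + if j = k then α n k / Fintype.card ι - if m = n then α n k else 0 else 0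

variable [Fintype ι] [DecidableEq ι] [DecidableEq κ]

theorem IsAllocation.splitShare {α : ι → κ → ℝ} (hα : IsAllocation α) (n : ι) (k : κ) :
    IsAllocation (splitShare α n k) := by
  have hcard : (Fintype.card ι : ℝ) ≠ 0 := by
    have : Nonempty ι := ⟨n⟩
    exact_mod_cast Fintype.card_ne_zero
  refine ⟨fun m j => ?_, fun j => ?_⟩
  · have hm := hα.1 m j
    have hshare : 0 ≤ α n k / Fintype.card ι := div_nonneg (hα.1 n k) (Nat.cast_nonneg _)
    unfold WeightedMaxMin.splitShare
    split_ifs <;> subst_vars <;> linarith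
  · by_cases hj : j = k
    · subst hj
      simp [WeightedMaxMin.splitShare, Finset.sum_add_distrib, Finset.sum_sub_distrib, hα.2 j,
        mul_div_cancel₀ _ hcard]
    · simp [WeightedMaxMin.splitShare, hj, hα.2 j]

theorem rate_splitShare_of_ne [Fintype κ] (R α : ι → κ → ℝ) {m n : ι} (hmn : m ≠ n)
    (k : κ) :
    rate R (splitShare α n k) m = rate R α m + α n k / Fintype.card ι * R m k := by
  simp [rate, WeightedMaxMin.splitShare, hmn, add_mul, Finset.sum_add_distrib, ite_mul]

end WeightedMaxMin

theorem exists_lt_forall_le_of_forall_lt {ι : Type*} [Finite ι] {f : ι → ℝ} {c : ℝ}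
    (h : ∀ m, c < f m) : ∃ c', c < c' ∧ ∀ m, c' ≤ f m := by
  obtain ⟨c', hc', hle⟩ := ((eventually_mem_nhdsWithin (s := Set.Ioi c) (a := c)).and
    ((eventually_all.2 fun m => eventually_le_nhds (h m)).filter_mono nhdsWithin_le_nhds)).exists
  exact ⟨c', hc', hle⟩

open WeightedMaxMin in
theorem weighted_maxmin_equal_rates_general (N K : ℕ)
    (γ : Fin N → ℝ) (hγ : ∀ n, 0 < γ n)
    (R : Fin N → Fin K → ℝ)
    (α : Fin N → Fin K → ℝ) (c : ℝ)
    (hα0 : ∀ n k, 0 ≤ α n k)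
    (hcol : ∀ k, ∑ n, α n k = 1)
    (hrate : ∀ n, c ≤ γ n * ∑ k, α n k * R n k)
    (n : Fin N)
    (hstrict : c < γ n * ∑ k, α n k * R n k)
    (k : Fin K)
    (hαnk : 0 < α n k)
    (hRmk : ∀ m, m ≠ n → 0 < R m k) :
    ∃ (α' : Fin N → Fin K → ℝ) (c' : ℝ),
      (∀ m j, 0 ≤ α' m j) ∧ (∀ j, ∑ m, α' m j = 1) ∧
      (∀ m, c' ≤ γ m * ∑ j, α' m j * R m j) ∧ c < c' := by
  have hα : IsAllocation α := ⟨hα0, hcol⟩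
  have hcard : (0 : ℝ) < Fintype.card (Fin N) := by exact_mod_cast Fintype.card_pos_iff.2 ⟨n⟩
  obtain ⟨α', ⟨hα'0, hα'col⟩, hlt⟩ :=
    exists_isAllocation_forall_lt γ R hα (hα.splitShare n k) (c := c) fun m => by
      by_cases hmn : m = n
      · exact Or.inl (hmn ▸ hstrict)
      · refine Or.inr ⟨hrate m, mul_lt_mul_of_pos_left ?_ (hγ m)⟩
        rw [rate_splitShare_of_ne R α hmn k]
        exact lt_add_of_pos_right _ (mul_pos (div_pos hαnk hcard) (hRmk m hmn))
  obtain ⟨c', hcc', hle⟩ := exists_lt_forall_le_of_forall_lt hlt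
  exact ⟨α', c', hα'0, hα'col, hle, hcc'⟩

/-- If `(α, c)` is feasible, user `n` has weighted rate strictly above `c`, and user `n`
has a bin `k` with `α n k > 0` and `R m k > 0` for all `m ≠ n`, then `c` is not optimal:
there is a feasible point with value strictly greater than `c`. Hence at the optimum all
weighted rates equal `c`. -/
theorem weighted_maxmin_equal_rates (N K : ℕ) (hN : 2 ≤ N)
    (γ : Fin N → ℝ) (hγ : ∀ n, 0 < γ n)
    (R : Fin N → Fin K → ℝ) (hR : ∀ n k, 0 ≤ R n k)
    (α : Fin N → Fin K → ℝ) (c : ℝ)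
    (hc : 0 < c)
    (hα0 : ∀ n k, 0 ≤ α n k)
    (hcol : ∀ k, ∑ n, α n k = 1)
    (hrate : ∀ n, c ≤ γ n * ∑ k, α n k * R n k)
    (n : Fin N)
    (hstrict : c < γ n * ∑ k, α n k * R n k)
    (k : Fin K)
    (hαnk : 0 < α n k)
    (hRmk : ∀ m, m ≠ n → 0 < R m k) :
    ∃ (α' : Fin N → Fin K → ℝ) (c' : ℝ),
      (∀ m j, 0 ≤ α' m j) ∧ (∀ j, ∑ m, α' m j = 1) ∧
      (∀ m, c' ≤ γ m * ∑ j, α' m j * R m j) ∧ c < c' :=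
  weighted_maxmin_equal_rates_general N K γ hγ R α c hα0 hcol hrate n hstrict k hαnk hRmk
end

section
/- Suppose (α, c) is feasible for the weighted max-min problem, some user n satisfies γ_n Σ_k α_{nk} R_{nk} > c, and there exists a bin k₀ with α_{n k₀} > 0 and R_{m k₀} > 0 for every m ≠ n. Then for sufficiently small ε > 0, the modified allocation α'_{n k₀} = α_{n k₀} − ε, α'_{m k₀} = α_{m k₀} + ε/(N−1) for m ≠ n, α'_{jk} = α_{jk} otherwise, is feasible and satisfies γ_m Σ_k α'_{mk} R_{mk} > c for every user m. -/
/-! Moving `ε` of user `n`'s share of bin `k₀` changes every weighted rate affinely in `ε`.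
User `n` starts strictly above `c`, so by continuity it stays above for small `ε`, while every
other user `m` gains `γ m ε R m k₀ / (N - 1) > 0` on top of a rate that was already `≥ c`. -/

open Filter Topology Finset

section transferShare

variable {ι κ : Type*} [DecidableEq ι] [DecidableEq κ]

def transferShare (α : ι → κ → ℝ) (n : ι) (k₀ : κ) (ε δ : ℝ) : ι → κ → ℝ :=
  fun j k => if k = k₀ then (if j = n then α j k - ε else α j k + δ) else α j k

variable {α : ι → κ → ℝ} {n : ι} {k₀ : κ} {ε δ : ℝ}

lemma transferShare_eq_add (j : ι) (k : κ) :
    transferShare α n k₀ ε δ j k =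
      α j k + if k = k₀ then (if j = n then -ε else δ) else 0 := by
  unfold transferShare
  split_ifs <;> ring

lemma transferShare_nonneg (hα : ∀ j k, 0 ≤ α j k) (hε : ε ≤ α n k₀) (hδ : 0 ≤ δ) (j : ι)
    (k : κ) : 0 ≤ transferShare α n k₀ ε δ j k := by
  unfold transferShare
  split_ifs with hk hj
  · subst hk hj; linarith
  · linarith [hα j k]
  · exact hα j k

lemma sum_transferShare_of_card_mul [Fintype ι] (h : ((Fintype.card ι : ℝ) - 1) * δ = ε)
    (k : κ) :
    ∑ j, transferShare α n k₀ ε δ j k = ∑ j, α j k := by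
  have hshift : ∑ j : ι, (if j = n then -ε else δ) = 0 := by
    have hsplit : ∀ j : ι, (if j = n then -ε else δ) = δ + if j = n then -ε - δ else 0 := by
      intro j; split_ifs <;> ring
    simp only [hsplit, sum_add_distrib, sum_const, card_univ, nsmul_eq_mul, sum_ite_eq',
      mem_univ, if_true]
    linarith
  simp only [transferShare_eq_add, sum_add_distrib]
  split_ifs <;> simp [hshift]

lemma sum_transferShare_mul [Fintype κ] (R : κ → ℝ) (m : ι) :
    ∑ k, transferShare α n k₀ ε δ m k * R k =
      ∑ k, α m k * R k + (if m = n then -ε else δ) * R k₀ := by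
  simp only [transferShare_eq_add, add_mul, sum_add_distrib, ite_mul, zero_mul, sum_ite_eq',
    mem_univ, if_true]

end transferShare

theorem weighted_maxmin_perturbation_general (N K : ℕ) (hN : 2 ≤ N)
    (γ : Fin N → ℝ) (hγ : ∀ n, 0 < γ n)
    (R : Fin N → Fin K → ℝ)
    (α : Fin N → Fin K → ℝ) (c : ℝ)
    (hα0 : ∀ n k, 0 ≤ α n k)
    (hcol : ∀ k, ∑ n, α n k = 1)
    (hfeas : ∀ n, c ≤ γ n * ∑ k, α n k * R n k)
    (n : Fin N)
    (hstrict : c < γ n * ∑ k, α n k * R n k)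
    (k₀ : Fin K)
    (hαnk : 0 < α n k₀)
    (hRmk : ∀ m, m ≠ n → 0 < R m k₀) :
    ∃ ε₀ > (0 : ℝ), ∀ ε : ℝ, 0 < ε → ε < ε₀ →
      ∀ α' : Fin N → Fin K → ℝ,
        (∀ j : Fin N, ∀ kk : Fin K,
          α' j kk = if kk = k₀ then
              (if j = n then α j kk - ε else α j kk + ε / (N - 1))
            else α j kk) →
        (∀ m kk, 0 ≤ α' m kk) ∧ (∀ kk, ∑ m, α' m kk = 1) ∧
        (∀ m, c < γ m * ∑ kk, α' m kk * R m kk) := by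
  have hN1 : (0 : ℝ) < N - 1 := by
    have : (2 : ℝ) ≤ N := by exact_mod_cast hN
    linarith
  have hrate_cont : Continuous fun ε : ℝ ↦ γ n * (∑ k, α n k * R n k + -ε * R n k₀) := by
    fun_prop
  have hshare : ∀ᶠ ε in 𝓝 (0 : ℝ), ε ≤ α n k₀ :=
    (eventually_lt_nhds hαnk).mono fun _ ↦ le_of_lt
  have hslack : ∀ᶠ ε in 𝓝 (0 : ℝ), c < γ n * (∑ k, α n k * R n k + -ε * R n k₀) :=
    (hrate_cont.tendsto' 0 _ (by simp)).eventually_const_lt hstrict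
  have hsmall : ∀ᶠ ε in 𝓝[>] (0 : ℝ), _ := nhdsWithin_le_nhds (hshare.and hslack)
  obtain ⟨ε₀, hε₀, hε₀_small⟩ := (nhdsGT_basis (0 : ℝ)).eventually_iff.1 hsmall
  refine ⟨ε₀, hε₀, fun ε hε hεε₀ α' hα' ↦ ?_⟩
  obtain ⟨hεα, hrate_n⟩ := hε₀_small ⟨hε, hεε₀⟩
  obtain rfl : α' = transferShare α n k₀ ε (ε / (N - 1)) := funext fun j ↦ funext (hα' j)
  have hδ : 0 < ε / (N - 1) := div_pos hε hN1
  refine ⟨transferShare_nonneg hα0 hεα hδ.le, fun k ↦ ?_, fun m ↦ ?_⟩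
  · rw [sum_transferShare_of_card_mul (by rw [Fintype.card_fin]; field_simp), hcol]
  · rw [sum_transferShare_mul]
    split_ifs with hm
    · exact hm ▸ hrate_n
    · calc c ≤ γ m * ∑ k, α m k * R m k := hfeas m
        _ < γ m * (∑ k, α m k * R m k + ε / (N - 1) * R m k₀) := by
          have := hγ m
          have := mul_pos hδ (hRmk m hm)
          gcongr
          linarith

/-- Moving a small amount `ε` of user `n`'s share of bin `k₀` uniformly to the other
`N - 1` users keeps feasibility and makes every weighted rate strictly exceed `c`. -/
theorem weighted_maxmin_perturbation (N K : ℕ) (hN : 2 ≤ N)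
    (γ : Fin N → ℝ) (hγ : ∀ n, 0 < γ n)
    (R : Fin N → Fin K → ℝ) (hR : ∀ n k, 0 ≤ R n k)
    (α : Fin N → Fin K → ℝ) (c : ℝ)
    (hα0 : ∀ n k, 0 ≤ α n k)
    (hcol : ∀ k, ∑ n, α n k = 1)
    (hfeas : ∀ n, c ≤ γ n * ∑ k, α n k * R n k)
    (n : Fin N)
    (hstrict : c < γ n * ∑ k, α n k * R n k)
    (k₀ : Fin K)
    (hαnk : 0 < α n k₀)
    (hRmk : ∀ m, m ≠ n → 0 < R m k₀) :
    ∃ ε₀ > (0 : ℝ), ∀ ε : ℝ, 0 < ε → ε < ε₀ →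
      ∀ α' : Fin N → Fin K → ℝ,
        (∀ j : Fin N, ∀ kk : Fin K,
          α' j kk = if kk = k₀ then
              (if j = n then α j kk - ε else α j kk + ε / (N - 1))
            else α j kk) →
        (∀ m kk, 0 ≤ α' m kk) ∧ (∀ kk, ∑ m, α' m kk = 1) ∧
        (∀ m, c < γ m * ∑ kk, α' m kk * R m kk) :=
  weighted_maxmin_perturbation_general N K hN γ hγ R α c hα0 hcol hfeas n hstrict k₀ hαnk hRmk
end

section
/- In the two-user algorithm, let k_min = min{k : A_k ≥ γ B_k} (which exists since A_K ≥ 0 = γ B_K). Then the splitting fraction α_{k_min} = (γ B_{k_min − 1} − A_{k_min − 1})/(R_{1 k_min} + γ R_{2 k_min}) satisfies 0 ≤ α_{k_min} ≤ 1, where A_0 = 0 and B_0 = Σ_{m=1}^K R_{2m}. -/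
/-! Write `k = k_min`. The numerator `γ B_{k-1} - A_{k-1}` is nonnegative by minimality of `k`
(for `k = 1` it is `γ B_0 ≥ 0`). Since `A_k = A_{k-1} + R_{1k}` and `B_{k-1} = R_{2k} + B_k`,
it equals `R_{1k} + γ R_{2k} - (A_k - γ B_k)`, which is at most the denominator because
`A_k ≥ γ B_k`. -/

open Finset

theorem Finset.sum_Icc_eq_add_sum_Icc_succ {M : Type*} [AddCommMonoid M] (f : ℕ → M) {a b : ℕ}
    (hab : a ≤ b) : ∑ m ∈ Icc a b, f m = f a + ∑ m ∈ Icc (a + 1) b, f m := by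
  rw [← add_sum_Ioc_eq_sum_Icc hab, Icc_add_one_left_eq_Ioc]

theorem two_user_alpha_in_unit_interval_general (K : ℕ) (γ : ℝ) (hγ : 0 < γ)
    (R1 R2 : ℕ → ℝ)
    (hR1 : ∀ k ∈ Finset.Icc 1 K, 0 < R1 k)
    (hR2 : ∀ k ∈ Finset.Icc 1 K, 0 < R2 k)
    (A B : ℕ → ℝ)
    (hA : ∀ k, A k = ∑ m ∈ Finset.Icc 1 k, R1 m)
    (hB : ∀ k, B k = ∑ m ∈ Finset.Icc (k + 1) K, R2 m)
    (kmin : ℕ) (hk1 : 1 ≤ kmin) (hkK : kmin ≤ K)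
    (hge : γ * B kmin ≤ A kmin)
    (hmin : ∀ j, 1 ≤ j → j < kmin → A j < γ * B j)
    (α : ℝ)
    (hα : α = (γ * B (kmin - 1) - A (kmin - 1)) / (R1 kmin + γ * R2 kmin)) :
    0 ≤ α ∧ α ≤ 1 := by
  obtain ⟨j, rfl⟩ : ∃ j, kmin = j + 1 := ⟨kmin - 1, by omega⟩
  rw [Nat.add_sub_cancel] at hα
  have hR1k := hR1 (j + 1) (mem_Icc.2 ⟨hk1, hkK⟩)
  have hR2k := hR2 (j + 1) (mem_Icc.2 ⟨hk1, hkK⟩)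
  have hA_succ : A (j + 1) = A j + R1 (j + 1) := by
    rw [hA, hA, sum_Icc_succ_top (by omega)]
  have hB_pred : B j = R2 (j + 1) + B (j + 1) := by
    rw [hB, hB, sum_Icc_eq_add_sum_Icc_succ _ hkK]
  have hnum_eq : γ * B j - A j = R1 (j + 1) + γ * R2 (j + 1) - (A (j + 1) - γ * B (j + 1)) := by
    rw [hA_succ, hB_pred]; ring
  have hnum : 0 ≤ γ * B j - A j := by
    rcases j.eq_zero_or_pos with rfl | hj
    · have hB0 : 0 ≤ B 0 := by
        rw [hB]
        exact sum_nonneg fun m hm => (hR2 m (by simpa using hm)).le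
      simpa [hA] using mul_nonneg hγ.le hB0
    · linarith [hmin j hj (by omega)]
  have hden : 0 < R1 (j + 1) + γ * R2 (j + 1) := by positivity
  rw [hα]
  exact ⟨div_nonneg hnum hden.le, (div_le_one hden).2 (by linarith)⟩

/-- The splitting fraction `α_{k_min}` of the two-user algorithm lies in `[0, 1]`. -/
theorem two_user_alpha_in_unit_interval (K : ℕ) (hK : 1 ≤ K) (γ : ℝ) (hγ : 0 < γ)
    (R1 R2 : ℕ → ℝ)
    (hR1 : ∀ k ∈ Finset.Icc 1 K, 0 < R1 k)
    (hR2 : ∀ k ∈ Finset.Icc 1 K, 0 < R2 k)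
    (A B : ℕ → ℝ)
    (hA : ∀ k, A k = ∑ m ∈ Finset.Icc 1 k, R1 m)
    (hB : ∀ k, B k = ∑ m ∈ Finset.Icc (k + 1) K, R2 m)
    (kmin : ℕ) (hk1 : 1 ≤ kmin) (hkK : kmin ≤ K)
    (hge : γ * B kmin ≤ A kmin)
    (hmin : ∀ j, 1 ≤ j → j < kmin → A j < γ * B j)
    (α : ℝ)
    (hα : α = (γ * B (kmin - 1) - A (kmin - 1)) / (R1 kmin + γ * R2 kmin)) :
    0 ≤ α ∧ α ≤ 1 :=
  two_user_alpha_in_unit_interval_general K γ hγ R1 R2 hR1 hR2 A B hA hB kmin hk1 hkK hge hmin α hα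
end

section
/- Lemma I.2: Suppose in a two-user allocation bins 1 and 2 are both shared, with user 1 receiving fractions α_1, α_2 and user 2 receiving β_1 = 1−α_1, β_2 = 1−α_2, and suppose R_{11}/R_{21} = R_{12}/R_{22}. Then there exists an alternative allocation of bins 1 and 2 in which at most one of the two bins is shared (the other is fully assigned to a single user), such that both users' total rates from these two bins are unchanged: specifically, if α_1 R_{11}/R_{12} ≤ β_2 one can set user 1's share of bin 1 to zero and increase his share of bin 2 by α_1 R_{11}/R_{12}; otherwise one can set user 2's share of bin 2 to zero and increase his share of bin 1 by β_2 R_{22}/R_{21}, and in both cases all shares remain in [0,1] and each user's combined rate over bins 1 and 2 is preserved. -/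
/-! Since `R11 / R21 = R12 / R22`, both users value a unit of bin 1 at the same multiple of a
unit of bin 2. Hence moving user 1's allocation along the line `x R11 + y R12 = const` keeps
user 2's rate fixed as well, and we may slide it until user 1 holds none of bin 1 or all of
bin 2. -/

open Set

lemma exists_boundary_point_weighted_sum_eq {a b x y : ℝ} (ha : 0 < a) (hb : 0 < b)
    (hx : x ∈ Icc 0 1) (hy : y ∈ Icc 0 1) :
    ∃ x' y', x' ∈ Icc 0 1 ∧ y' ∈ Icc 0 1 ∧ (x' = 0 ∨ y' = 1) ∧
      x' * a + y' * b = x * a + y * b := by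
  obtain ⟨hx0, hx1⟩ := hx
  obtain ⟨hy0, hy1⟩ := hy
  by_cases h : x * a ≤ (1 - y) * b
  · have hshift : x * a / b ≤ 1 - y := (div_le_iff₀ hb).2 h
    refine ⟨0, y + x * a / b, ⟨le_rfl, zero_le_one⟩, ⟨by positivity, by linarith⟩,
      Or.inl rfl, ?_⟩
    field_simp
    ring
  · have hshift : (1 - y) * b / a ≤ x := (div_le_iff₀ ha).2 (by linarith)
    refine ⟨x - (1 - y) * b / a, 1, ⟨by linarith, ?_⟩, ⟨zero_le_one, le_rfl⟩, Or.inr rfl, ?_⟩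
    · have : 0 ≤ (1 - y) * b / a := div_nonneg (mul_nonneg (by linarith) hb.le) ha.le
      linarith
    · field_simp
      ring

lemma complement_rate_eq_of_rate_eq {R11 R12 R21 R22 x y x' y' : ℝ} (hR12 : R12 ≠ 0)
    (hratio : R11 * R22 = R12 * R21) (h : x' * R11 + y' * R12 = x * R11 + y * R12) :
    (1 - x') * R21 + (1 - y') * R22 = (1 - x) * R21 + (1 - y) * R22 := by
  apply mul_left_cancel₀ hR12
  linear_combination (-R22) * h + (x' - x) * hratio

theorem merge_two_shared_bins_general (R11 R12 R21 R22 : ℝ)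
    (h11 : 0 < R11) (h12 : 0 < R12)
    (hratio : R11 * R22 = R12 * R21)
    (α1 α2 : ℝ) (hα1 : 0 < α1) (hα1' : α1 < 1) (hα2 : 0 < α2) (hα2' : α2 < 1) :
    ∃ α1' α2' : ℝ,
      0 ≤ α1' ∧ α1' ≤ 1 ∧ 0 ≤ α2' ∧ α2' ≤ 1 ∧
      (α1' = 0 ∨ α1' = 1 ∨ α2' = 0 ∨ α2' = 1) ∧
      α1' * R11 + α2' * R12 = α1 * R11 + α2 * R12 ∧
      (1 - α1') * R21 + (1 - α2') * R22 = (1 - α1) * R21 + (1 - α2) * R22 := by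
  obtain ⟨α1', α2', ⟨h0, h1⟩, ⟨h0', h1'⟩, hbd, hrate⟩ :=
    exists_boundary_point_weighted_sum_eq h11 h12 ⟨hα1.le, hα1'.le⟩ ⟨hα2.le, hα2'.le⟩
  exact ⟨α1', α2', h0, h1, h0', h1', by tauto, hrate,
    complement_rate_eq_of_rate_eq h12.ne' hratio hrate⟩

/-- Lemma I.2: if bins 1 and 2 are both shared and their rate ratios coincide, then there
is an alternative allocation of these two bins in which at most one bin is shared and both
users' rates from the two bins are unchanged. -/
theorem merge_two_shared_bins (R11 R12 R21 R22 : ℝ)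
    (h11 : 0 < R11) (h12 : 0 < R12) (h21 : 0 < R21) (h22 : 0 < R22)
    (hratio : R11 * R22 = R12 * R21)
    (α1 α2 : ℝ) (hα1 : 0 < α1) (hα1' : α1 < 1) (hα2 : 0 < α2) (hα2' : α2 < 1) :
    ∃ α1' α2' : ℝ,
      0 ≤ α1' ∧ α1' ≤ 1 ∧ 0 ≤ α2' ∧ α2' ≤ 1 ∧
      (α1' = 0 ∨ α1' = 1 ∨ α2' = 0 ∨ α2' = 1) ∧
      α1' * R11 + α2' * R12 = α1 * R11 + α2 * R12 ∧
      (1 - α1') * R21 + (1 - α2') * R22 = (1 - α1) * R21 + (1 - α2) * R22 :=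
  merge_two_shared_bins_general R11 R12 R21 R22 h11 h12 hratio α1 α2 hα1 hα1' hα2 hα2'
end
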